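/- The Kullback–Leibler divergence between two Maxwellian energy densities at temperatures T₁ and T₂ satisfies D_KL(f_Mxw(T₁) ‖ f_Mxw(T₂)) = (3/2)[T₁/T₂ − ln(T₁/T₂) − 1], i.e., (3/2) times the Itakura–Saito distance d_IS(T₁,T₂). -/

import Mathlib

open MeasureTheory Real

/-- The Maxwellian energy density at temperature `T`. -/
noncomputable def maxwellDensity (T E : ℝ) : ℝ :=
  (2 / Real.sqrt π) * T ^ (-(3:ℝ)/2) * Real.sqrt E * Real.exp (-E / T)

/-- Kullback–Leibler divergence between densities on `(0,∞)`. -/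
noncomputable def klDiv (f g : ℝ → ℝ) : ℝ :=
  ∫ E in Set.Ioi (0:ℝ), f E * Real.log (f E / g E)

/-- The Itakura–Saito distance. -/
noncomputable def itakuraSaito (x y : ℝ) : ℝ := x / y - Real.log (x / y) - 1

lemma aux_integ {s b : ℝ} (hs : -1 < s) (hb : 0 < b) :
    IntegrableOn (fun E : ℝ => E ^ s * Real.exp (-(b * E))) (Set.Ioi 0) := by
  have := integrableOn_rpow_mul_exp_neg_mul_rpow hs (zero_lt_one : (0:ℝ) < 1) hb
  refine this.congr_fun (fun E hE => ?_) measurableSet_Ioi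
  beta_reduce
  rw [Real.rpow_one, neg_mul]

lemma aux_val {s b : ℝ} (hs : 0 < s) (hb : 0 < b) :
    ∫ E in Set.Ioi (0:ℝ), E ^ (s - 1) * Real.exp (-(b * E)) = (1/b) ^ s * Real.Gamma s :=
  Real.integral_rpow_mul_exp_neg_mul_Ioi hs hb

theorem maxwell_klDiv_eq_itakuraSaito (T₁ T₂ : ℝ) (h₁ : T₁ > 0) (h₂ : T₂ > 0) :
    klDiv (maxwellDensity T₁) (maxwellDensity T₂) =
      (3/2) * itakuraSaito T₁ T₂ := by
  have hπ : (0:ℝ) < Real.sqrt π := Real.sqrt_pos.mpr Real.pi_pos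
  set K : ℝ := 2 / Real.sqrt π with hK
  have hK0 : 0 < K := by positivity
  set c : ℝ := (3/2) * (Real.log T₂ - Real.log T₁) with hc
  set d : ℝ := 1/T₂ - 1/T₁ with hd
  have hb : (0:ℝ) < T₁⁻¹ := by positivity
  have hpt : Set.EqOn
      (fun E => maxwellDensity T₁ E * Real.log (maxwellDensity T₁ E / maxwellDensity T₂ E))
      (fun E => (K * T₁ ^ (-(3:ℝ)/2)) *
          (c * (E ^ ((3:ℝ)/2 - 1) * Real.exp (-(T₁⁻¹ * E)))
           + d * (E ^ ((5:ℝ)/2 - 1) * Real.exp (-(T₁⁻¹ * E)))))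
      (Set.Ioi 0) := by
    intro E hE
    have hE0 : (0:ℝ) < E := hE
    have hf1 : 0 < maxwellDensity T₁ E := by
      unfold maxwellDensity
      have := Real.rpow_pos_of_pos h₁ (-(3:ℝ)/2)
      positivity
    have hf2 : 0 < maxwellDensity T₂ E := by
      unfold maxwellDensity
      have := Real.rpow_pos_of_pos h₂ (-(3:ℝ)/2)
      positivity
    have hlog : Real.log (maxwellDensity T₁ E / maxwellDensity T₂ E) = c + d * E := by
      rw [Real.log_div hf1.ne' hf2.ne']
      unfold maxwellDensity
      rw [Real.log_mul (by positivity) (Real.exp_ne_zero _),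
          Real.log_mul (by positivity) (Real.exp_ne_zero _),
          Real.log_mul (by positivity) ((Real.sqrt_pos.mpr hE0).ne'),
          Real.log_mul (by positivity) ((Real.sqrt_pos.mpr hE0).ne'),
          Real.log_mul hK0.ne' ((Real.rpow_pos_of_pos h₁ _).ne'),
          Real.log_mul hK0.ne' ((Real.rpow_pos_of_pos h₂ _).ne'),
          Real.log_rpow h₁, Real.log_rpow h₂, Real.log_exp, Real.log_exp]
      rw [hc, hd]
      simp only [one_div, div_eq_inv_mul]
      ring
    simp only
    rw [hlog]
    unfold maxwellDensity
    have hs : Real.sqrt E = E ^ ((1:ℝ)/2) := Real.sqrt_eq_rpow E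
    have h32 : E ^ ((3:ℝ)/2 - 1) = E ^ ((1:ℝ)/2) := by norm_num
    have h52 : E ^ ((5:ℝ)/2 - 1) = E * E ^ ((1:ℝ)/2) := by
      rw [show (5:ℝ)/2 - 1 = 1 + (1:ℝ)/2 by norm_num, Real.rpow_add hE0, Real.rpow_one]
    have hexp : Real.exp (-E / T₁) = Real.exp (-(T₁⁻¹ * E)) := by
      rw [neg_div, div_eq_inv_mul]
    rw [hs, h32, h52, hexp]
    ring
  rw [klDiv, setIntegral_congr_fun measurableSet_Ioi hpt]
  have hint1 : IntegrableOn (fun E : ℝ => E ^ ((3:ℝ)/2 - 1) * Real.exp (-(T₁⁻¹ * E)))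
      (Set.Ioi 0) := aux_integ (by norm_num) hb
  have hint2 : IntegrableOn (fun E : ℝ => E ^ ((5:ℝ)/2 - 1) * Real.exp (-(T₁⁻¹ * E)))
      (Set.Ioi 0) := aux_integ (by norm_num) hb
  rw [MeasureTheory.integral_const_mul,
      MeasureTheory.integral_add (hint1.const_mul c) (hint2.const_mul d),
      MeasureTheory.integral_const_mul, MeasureTheory.integral_const_mul,
      aux_val (by norm_num : (0:ℝ) < 3/2) hb, aux_val (by norm_num : (0:ℝ) < 5/2) hb]
  have g12 : Real.Gamma (1/2) = Real.sqrt π := Real.Gamma_one_half_eq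
  have g32 : Real.Gamma (3/2) = Real.sqrt π / 2 := by
    rw [show (3:ℝ)/2 = 1/2 + 1 by norm_num, Real.Gamma_add_one (by norm_num), g12]; ring
  have g52 : Real.Gamma (5/2) = 3 * Real.sqrt π / 4 := by
    rw [show (5:ℝ)/2 = 3/2 + 1 by norm_num, Real.Gamma_add_one (by norm_num), g32]; ring
  have hTi : (1:ℝ)/T₁⁻¹ = T₁ := by rw [one_div, inv_inv]
  rw [g32, g52, hTi]
  have e1 : T₁ ^ (-(3:ℝ)/2) * T₁ ^ ((3:ℝ)/2) = 1 := by
    rw [← Real.rpow_add h₁]; norm_num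
  have e2 : T₁ ^ (-(3:ℝ)/2) * T₁ ^ ((5:ℝ)/2) = T₁ := by
    rw [← Real.rpow_add h₁]; norm_num
  rw [show K * T₁ ^ (-(3:ℝ)/2) *
        (c * (T₁ ^ ((3:ℝ)/2) * (Real.sqrt π / 2)) + d * (T₁ ^ ((5:ℝ)/2) * (3 * Real.sqrt π / 4)))
      = (T₁ ^ (-(3:ℝ)/2) * T₁ ^ ((3:ℝ)/2)) * (K * c * (Real.sqrt π / 2))
        + (T₁ ^ (-(3:ℝ)/2) * T₁ ^ ((5:ℝ)/2)) * (K * d * (3 * Real.sqrt π / 4)) by ring,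
      e1, e2]
  rw [itakuraSaito, Real.log_div h₁.ne' h₂.ne', hK, hc, hd]
  field_simp
  ring
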